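/- Convexity of capacity (abstract): let S ⊆ V be finite and for linear E : V → V define C(E) = sup_{s∈S} R(E s), where R is robustness with respect to S. If E = Σⱼ cⱼ Eⱼ is a finite real linear combination of linear maps (coefficients cⱼ ∈ ℝ with Σⱼ cⱼ arbitrary) and each C(Eⱼ) is finite, then C(E) ≤ Σⱼ |cⱼ| C(Eⱼ), provided each R(Eⱼ s) is finite for all s ∈ S. -/
import Mathlib


/-- The robustness of `x` with respect to the finite set `S`. -/
noncomputable def rob {V : Type*} [AddCommGroup V] [Module ℝ V] (S : Finset V) (x : V) : ℝ :=
  sInf {r : ℝ | ∃ q : V → ℝ,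
    (∑ s ∈ S, q s = 1) ∧ (∑ s ∈ S, q s • s = x) ∧ r = ∑ s ∈ S, |q s|}

lemma rob_bddBelow {V : Type*} [AddCommGroup V] [Module ℝ V] (S : Finset V) (x : V) :
    BddBelow {r : ℝ | ∃ q : V → ℝ,
      (∑ s ∈ S, q s = 1) ∧ (∑ s ∈ S, q s • s = x) ∧ r = ∑ s ∈ S, |q s|} := by
  refine ⟨0, ?_⟩
  rintro r ⟨q, -, -, rfl⟩
  exact Finset.sum_nonneg fun i _ => abs_nonneg _

lemma rob_le {V : Type*} [AddCommGroup V] [Module ℝ V] (S : Finset V) (x : V)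
    (q : V → ℝ) (h1 : ∑ s ∈ S, q s = 1) (h2 : ∑ s ∈ S, q s • s = x) :
    rob S x ≤ ∑ s ∈ S, |q s| :=
  csInf_le (rob_bddBelow S x) ⟨q, h1, h2, rfl⟩

theorem stmt_19 {V : Type*} [AddCommGroup V] [Module ℝ V]
    (S : Finset V) (hS : S.Nonempty) {ι : Type*} [Fintype ι]
    (c : ι → ℝ) (E : ι → (V →ₗ[ℝ] V)) (hc : ∑ j, c j = 1)
    -- each `R(Eⱼ s)` is finite: every `Eⱼ s` admits a decomposition over `S`
    (hdec : ∀ j, ∀ s ∈ S, ∃ q : V → ℝ,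
      (∑ t ∈ S, q t = 1) ∧ ∑ t ∈ S, q t • t = E j s) :
    S.sup' hS (fun s => rob S ((∑ j, c j • E j) s)) ≤
      ∑ j, |c j| * S.sup' hS (fun s => rob S (E j s)) := by
  apply Finset.sup'_le
  intro s hs
  have key : rob S ((∑ j, c j • E j) s) ≤ ∑ j, |c j| * rob S (E j s) := by
    have hK : (0:ℝ) < ∑ j, |c j| :=
      lt_of_lt_of_le one_pos (by calc (1:ℝ) = |∑ j, c j| := by rw [hc]; simp
        _ ≤ ∑ j, |c j| := Finset.abs_sum_le_sum_abs c _)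
    apply le_of_forall_pos_le_add
    intro ε hε
    have hε' : 0 < ε / (∑ j, |c j|) := div_pos hε hK
    have hch : ∀ j : ι, ∃ q : V → ℝ, (∑ t ∈ S, q t = 1) ∧ (∑ t ∈ S, q t • t = E j s) ∧
        ∑ t ∈ S, |q t| < rob S (E j s) + ε / (∑ j, |c j|) := by
      intro j
      obtain ⟨q0, hq1, hq2⟩ := hdec j s hs
      obtain ⟨r, ⟨q, h1, h2, hr⟩, hlt⟩ :=
        Real.lt_sInf_add_pos (s := {r : ℝ | ∃ q : V → ℝ,
          (∑ t ∈ S, q t = 1) ∧ (∑ t ∈ S, q t • t = E j s) ∧ r = ∑ t ∈ S, |q t|})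
          ⟨_, q0, hq1, hq2, rfl⟩ hε'
      exact ⟨q, h1, h2, by rw [← hr]; exact hlt⟩
    choose qf hqf1 hqf2 hqf3 using hch
    set q : V → ℝ := fun t => ∑ j, c j * qf j t with hq
    have h1 : ∑ t ∈ S, q t = 1 := by
      rw [Finset.sum_comm]
      simp only [← Finset.mul_sum]
      simp [hqf1, hc]
    have h2 : ∑ t ∈ S, q t • t = (∑ j, c j • E j) s := by
      simp only [hq, Finset.sum_smul, mul_smul]
      rw [Finset.sum_comm]
      simp only [← Finset.smul_sum, hqf2]
      simp [Finset.sum_apply]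
    calc rob S ((∑ j, c j • E j) s) ≤ ∑ t ∈ S, |q t| := rob_le S _ q h1 h2
      _ ≤ ∑ t ∈ S, ∑ j, |c j| * |qf j t| := by
          apply Finset.sum_le_sum
          intro t _
          simpa only [abs_mul] using Finset.abs_sum_le_sum_abs (fun j => c j * qf j t) _
      _ = ∑ j, |c j| * ∑ t ∈ S, |qf j t| := by
          rw [Finset.sum_comm]; simp [Finset.mul_sum]
      _ ≤ ∑ j, |c j| * (rob S (E j s) + ε / (∑ j, |c j|)) := by
          apply Finset.sum_le_sum
          intro j _
          exact mul_le_mul_of_nonneg_left (le_of_lt (hqf3 j)) (abs_nonneg _)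
      _ = (∑ j, |c j| * rob S (E j s)) + (∑ j, |c j|) * (ε / (∑ j, |c j|)) := by
          simp [mul_add, Finset.sum_add_distrib, Finset.sum_mul]
      _ = (∑ j, |c j| * rob S (E j s)) + ε := by
          rw [mul_div_cancel₀ _ (ne_of_gt hK)]
  refine key.trans (Finset.sum_le_sum fun j _ => ?_)
  exact mul_le_mul_of_nonneg_left (Finset.le_sup' (fun s => rob S (E j s)) hs) (abs_nonneg _)
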